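/- arXiv:1709.04148 — 2 statements merged into one kernel-verified Lean document; each statement's English description precedes it below -/
import Mathlib

section
/- Let I and J be finite index sets. For each i ∈ I let w_i ∈ ℝ, and for each i ∈ I, j ∈ J let P_{ji} ∈ [0,1] and ξ_{ji} ∈ ℝ. For each i define χ_i = Σ_{∅≠T⊆J} (Π_{j∈T} P_{ji})(Π_{j∈J∖T}(1−P_{ji})) · (Σ_{j∈T} ξ_{ji})/|T| and η_{ij} = P_{ji} · Σ_{T⊆J∖{j}} (1/(|T|+1)) (Π_{k∈T} P_{ki})(Π_{k∈J∖(T∪{j})}(1−P_{ki})). Then Σ_{i∈I} w_i χ_i = Σ_{j∈J} Σ_{i∈I} w_i η_{ij} ξ_{ji}; that is, the total payment of all mobile devices equals the total revenue of all MEC servers. -/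
/-!
Expand the average price `(∑ j ∈ T, ξ j) / |T|` of a covering set `T` into its summands and
exchange the sums over `T` and `j ∈ T`: the sets containing `j` are the sets `insert j T` with
`T ⊆ J \ {j}`, of cardinality `|T| + 1`, and the factor `P j` splits off their coverage
probability. This identifies each device's payment with `∑ j, η j * ξ j`; summing over devices
weighted by `w` gives the theorem.
-/

open Finset

namespace Finset

variable {α : Type*} [DecidableEq α]

theorem sum_powerset_filter_mem {β : Type*} [AddCommMonoid β] {s : Finset α} {a : α}
    (ha : a ∈ s) (f : Finset α → β) :
    ∑ t ∈ s.powerset with a ∈ t, f t = ∑ t ∈ (s.erase a).powerset, f (insert a t) := by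
  refine sum_nbij' (erase · a) (insert a) ?_ ?_ ?_ ?_ ?_ <;> intro t ht <;>
    simp only [mem_filter, mem_powerset] at ht ⊢
  · exact erase_subset_erase a ht.1
  · exact ⟨insert_subset ha (ht.trans (erase_subset a s)), mem_insert_self a t⟩
  · exact insert_erase ht.2
  · exact erase_insert fun h ↦ notMem_erase a s (ht h)
  · rw [insert_erase ht.2]

theorem sum_powerset_sum_comm {β : Type*} [AddCommMonoid β] (s : Finset α)
    (f : Finset α → α → β) :
    ∑ t ∈ s.powerset, ∑ a ∈ t, f t a = ∑ a ∈ s, ∑ t ∈ (s.erase a).powerset, f (insert a t) a := by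
  rw [sum_comm' (t' := s) (s' := fun a ↦ s.powerset.filter (a ∈ ·))]
  · exact sum_congr rfl fun a ha ↦ sum_powerset_filter_mem ha (f · a)
  · intro t a
    simp only [mem_powerset, mem_filter]
    exact ⟨fun h ↦ ⟨⟨h.1, h.2⟩, h.1 h.2⟩, fun h ↦ ⟨h.1.1, h.1.2⟩⟩

variable {𝕜 : Type*} [Field 𝕜]

theorem sum_powerset_mul_sum_div_card (s : Finset α) (π : Finset α → 𝕜) (x : α → 𝕜) :
    ∑ t ∈ s.powerset, π t * ((∑ a ∈ t, x a) / t.card)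
      = ∑ a ∈ s, (∑ t ∈ (s.erase a).powerset, π (insert a t) / (t.card + 1)) * x a := by
  simp_rw [sum_div, mul_sum, sum_mul]
  rw [sum_powerset_sum_comm]
  refine sum_congr rfl fun a _ ↦ sum_congr rfl fun t ht ↦ ?_
  have hat : a ∉ t := notMem_of_mem_powerset_of_notMem ht (notMem_erase a s)
  rw [card_insert_of_notMem hat, Nat.cast_succ]
  ring

theorem sum_nonempty_powerset_prod_mul_sum_div_card (s : Finset α) (p x : α → 𝕜) :
    ∑ t ∈ s.powerset.erase ∅,
      (∏ a ∈ t, p a) * (∏ a ∈ s \ t, (1 - p a)) * ((∑ a ∈ t, x a) / t.card)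
      = ∑ a ∈ s, (p a * ∑ t ∈ (s.erase a).powerset,
          (1 / ((t.card : 𝕜) + 1)) * (∏ b ∈ t, p b) * (∏ b ∈ s \ insert a t, (1 - p b)))
        * x a := by
  rw [sum_erase _ (by simp), sum_powerset_mul_sum_div_card]
  refine sum_congr rfl fun a _ ↦ ?_
  rw [mul_sum, sum_mul, sum_mul]
  refine sum_congr rfl fun t ht ↦ ?_
  have hat : a ∉ t := notMem_of_mem_powerset_of_notMem ht (notMem_erase a s)
  rw [prod_insert hat]
  ring

end Finset

theorem total_payment_eq_total_revenue_general
    {ι κ : Type*} [DecidableEq κ] (I : Finset ι) (J : Finset κ)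
    (w : ι → ℝ) (P ξ : κ → ι → ℝ)
    (χ : ι → ℝ)
    (hχ : ∀ i ∈ I, χ i = ∑ T ∈ J.powerset.erase ∅,
      (∏ j ∈ T, P j i) * (∏ j ∈ J \ T, (1 - P j i)) * ((∑ j ∈ T, ξ j i) / T.card))
    (η : ι → κ → ℝ)
    (hη : ∀ i ∈ I, ∀ j ∈ J, η i j = P j i * ∑ T ∈ (J.erase j).powerset,
      (1 / ((T.card : ℝ) + 1)) * (∏ k ∈ T, P k i) * (∏ k ∈ J \ insert j T, (1 - P k i))) :
    ∑ i ∈ I, w i * χ i = ∑ j ∈ J, ∑ i ∈ I, w i * η i j * ξ j i := by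
  have payment_eq (i) (hi : i ∈ I) : χ i = ∑ j ∈ J, η i j * ξ j i := by
    rw [hχ i hi, sum_nonempty_powerset_prod_mul_sum_div_card]
    exact sum_congr rfl fun j hj ↦ by rw [hη i hi j hj]
  calc ∑ i ∈ I, w i * χ i = ∑ i ∈ I, ∑ j ∈ J, w i * η i j * ξ j i := by
        refine sum_congr rfl fun i hi ↦ ?_
        simp_rw [payment_eq i hi, mul_sum, mul_assoc]
    _ = ∑ j ∈ J, ∑ i ∈ I, w i * η i j * ξ j i := sum_comm

/-- Budget balance (equation (7) of the paper): the total payment of all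
mobile devices `i ∈ I` (scheduled with probability `w i`, covered by server `j` with
probability `P j i`, paying price `ξ j i` to a uniformly selected covering server) equals
the total revenue of all MEC servers `j ∈ J`. -/
theorem total_payment_eq_total_revenue
    {ι κ : Type*} [DecidableEq κ] (I : Finset ι) (J : Finset κ)
    (w : ι → ℝ) (P ξ : κ → ι → ℝ)
    (hP : ∀ i ∈ I, ∀ j ∈ J, P j i ∈ Set.Icc (0 : ℝ) 1)
    (χ : ι → ℝ)
    (hχ : ∀ i ∈ I, χ i = ∑ T ∈ J.powerset.erase ∅,
      (∏ j ∈ T, P j i) * (∏ j ∈ J \ T, (1 - P j i)) * ((∑ j ∈ T, ξ j i) / T.card))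
    (η : ι → κ → ℝ)
    (hη : ∀ i ∈ I, ∀ j ∈ J, η i j = P j i * ∑ T ∈ (J.erase j).powerset,
      (1 / ((T.card : ℝ) + 1)) * (∏ k ∈ T, P k i) * (∏ k ∈ J \ insert j T, (1 - P k i))) :
    ∑ i ∈ I, w i * χ i = ∑ j ∈ J, ∑ i ∈ I, w i * η i j * ξ j i :=
  total_payment_eq_total_revenue_general I J w P ξ χ hχ η hη
end

section
/- Let I and J be finite index sets. For each i ∈ I let w_i, α_i, T_i ∈ ℝ, for each j ∈ J let μ_j, C_j ∈ ℝ, and for each i ∈ I, j ∈ J let P_{ji} ∈ [0,1] and ξ_{ji} ∈ ℝ. Define χ_i and η_{ij} as the uniform-selection average and selection weights built from (P_{ji}, ξ_{ji})_{j∈J}, set P_i = w_i χ_i, R_j = Σ_{i∈I} w_i η_{ij} ξ_{ji}, and define the payoffs u_i = α_i T_i − P_i and ũ_j = R_j − μ_j C_j. Then the sum payoff f = Σ_{i∈I} u_i + Σ_{j∈J} ũ_j equals Σ_{i∈I} α_i T_i − Σ_{j∈J} μ_j C_j; i.e., the pricing terms cancel and have no effect on the sum payoff. -/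
/-!
Conditioning on which servers cover device `i`, its expected payment splits server by
server: `χ_i = ∑_j η_ij ξ_ji`, which is the exchange of the sum over coverage sets `S` with
the sum over `j ∈ S` (writing `S = insert j T`). Weighted by `w_i` and summed over devices,
the payments are therefore exactly the servers' revenues, and they cancel in the sum payoff.
-/

open Finset

namespace Finset

variable {κ M : Type*} [DecidableEq κ] [AddCommMonoid M]

theorem sum_powerset_sum_mem (J : Finset κ) (F : Finset κ → κ → M) :
    ∑ S ∈ J.powerset, ∑ j ∈ S, F S j =
      ∑ j ∈ J, ∑ T ∈ (J.erase j).powerset, F (insert j T) j := by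
  calc ∑ S ∈ J.powerset, ∑ j ∈ S, F S j
      = ∑ S ∈ J.powerset, ∑ j ∈ J, if j ∈ S then F S j else 0 := by
        refine sum_congr rfl fun S hS => ?_
        rw [sum_ite_mem, inter_eq_right.mpr (mem_powerset.mp hS)]
    _ = ∑ j ∈ J, ∑ S ∈ J.powerset, if j ∈ S then F S j else 0 := sum_comm
    _ = ∑ j ∈ J, ∑ T ∈ (J.erase j).powerset, F (insert j T) j := by
        refine sum_congr rfl fun j hj => ?_
        rw [← insert_erase hj, sum_powerset_insert (J.notMem_erase j),
          erase_insert (J.notMem_erase j)]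
        have hT : ∀ T ∈ (J.erase j).powerset, j ∉ T := fun T hT hjT =>
          J.notMem_erase j (mem_powerset.mp hT hjT)
        simp +contextual [hT]

end Finset

section UniformSelection

variable {κ 𝕜 : Type*} [DecidableEq κ] [Field 𝕜]

/-- `χ_i` of the paper for `p = P_{·i}`, `x = ξ_{·i}`; `selectionWeight J p j` is `η_{ij}`. -/
def uniformSelectionAverage (J : Finset κ) (p x : κ → 𝕜) : 𝕜 :=
  ∑ S ∈ J.powerset.erase ∅,
    (∏ j ∈ S, p j) * (∏ j ∈ J \ S, (1 - p j)) * ((∑ j ∈ S, x j) / S.card)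

def selectionWeight (J : Finset κ) (p : κ → 𝕜) (j : κ) : 𝕜 :=
  p j * ∑ S ∈ (J.erase j).powerset,
    (1 / ((S.card : 𝕜) + 1)) * (∏ k ∈ S, p k) * (∏ k ∈ J \ insert j S, (1 - p k))

theorem uniformSelectionAverage_eq_sum_selectionWeight_mul (J : Finset κ) (p x : κ → 𝕜) :
    uniformSelectionAverage J p x = ∑ j ∈ J, selectionWeight J p j * x j := by
  rw [uniformSelectionAverage, sum_erase _ (by simp)]
  simp_rw [div_eq_mul_inv, sum_mul, mul_sum]
  rw [sum_powerset_sum_mem]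
  refine sum_congr rfl fun j _ => ?_
  rw [selectionWeight, mul_sum, sum_mul]
  refine sum_congr rfl fun T hT => ?_
  have hjT : j ∉ T := fun hjT => J.notMem_erase j (mem_powerset.mp hT hjT)
  rw [prod_insert hjT, card_insert_of_notMem hjT]
  push_cast
  ring

end UniformSelection

theorem sum_payoff_pricing_cancels_general
    {ι κ : Type*} [DecidableEq κ] (I : Finset ι) (J : Finset κ)
    (w α T : ι → ℝ) (μ C : κ → ℝ) (P ξ : κ → ι → ℝ)
    (χ : ι → ℝ)
    (hχ : ∀ i ∈ I, χ i = ∑ S ∈ J.powerset.erase ∅,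
      (∏ j ∈ S, P j i) * (∏ j ∈ J \ S, (1 - P j i)) * ((∑ j ∈ S, ξ j i) / S.card))
    (η : ι → κ → ℝ)
    (hη : ∀ i ∈ I, ∀ j ∈ J, η i j = P j i * ∑ S ∈ (J.erase j).powerset,
      (1 / ((S.card : ℝ) + 1)) * (∏ k ∈ S, P k i) * (∏ k ∈ J \ insert j S, (1 - P k i)))
    (Pay : ι → ℝ) (hPay : ∀ i ∈ I, Pay i = w i * χ i)
    (R : κ → ℝ) (hR : ∀ j ∈ J, R j = ∑ i ∈ I, w i * η i j * ξ j i)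
    (u : ι → ℝ) (hu : ∀ i ∈ I, u i = α i * T i - Pay i)
    (utilde : κ → ℝ) (hutilde : ∀ j ∈ J, utilde j = R j - μ j * C j)
    (f : ℝ) (hf : f = ∑ i ∈ I, u i + ∑ j ∈ J, utilde j) :
    f = ∑ i ∈ I, α i * T i - ∑ j ∈ J, μ j * C j := by
  have payments_eq_revenues : ∑ i ∈ I, Pay i = ∑ j ∈ J, R j := by
    rw [sum_congr rfl hR, sum_comm]
    refine sum_congr rfl fun i hi => ?_
    have hχ_split : χ i = ∑ j ∈ J, η i j * ξ j i := by
      rw [hχ i hi, ← uniformSelectionAverage, uniformSelectionAverage_eq_sum_selectionWeight_mul]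
      exact sum_congr rfl fun j hj => by rw [hη i hi j hj, selectionWeight]
    rw [hPay i hi, hχ_split, mul_sum]
    simp only [mul_assoc]
  rw [hf, sum_congr rfl hu, sum_congr rfl hutilde, sum_sub_distrib, sum_sub_distrib,
    payments_eq_revenues]
  ring

/-- Lemma 1 of the paper (case `β i = 1`, `γ j = 1`): the pricing terms
cancel in the sum payoff of a coalition, so
`∑ i, u i + ∑ j, utilde j = ∑ i, α i * T i - ∑ j, μ j * C j`. -/
theorem sum_payoff_pricing_cancels
    {ι κ : Type*} [DecidableEq κ] (I : Finset ι) (J : Finset κ)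
    (w α T : ι → ℝ) (μ C : κ → ℝ) (P ξ : κ → ι → ℝ)
    (hP : ∀ i ∈ I, ∀ j ∈ J, P j i ∈ Set.Icc (0 : ℝ) 1)
    (χ : ι → ℝ)
    (hχ : ∀ i ∈ I, χ i = ∑ S ∈ J.powerset.erase ∅,
      (∏ j ∈ S, P j i) * (∏ j ∈ J \ S, (1 - P j i)) * ((∑ j ∈ S, ξ j i) / S.card))
    (η : ι → κ → ℝ)
    (hη : ∀ i ∈ I, ∀ j ∈ J, η i j = P j i * ∑ S ∈ (J.erase j).powerset,
      (1 / ((S.card : ℝ) + 1)) * (∏ k ∈ S, P k i) * (∏ k ∈ J \ insert j S, (1 - P k i)))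
    (Pay : ι → ℝ) (hPay : ∀ i ∈ I, Pay i = w i * χ i)
    (R : κ → ℝ) (hR : ∀ j ∈ J, R j = ∑ i ∈ I, w i * η i j * ξ j i)
    (u : ι → ℝ) (hu : ∀ i ∈ I, u i = α i * T i - Pay i)
    (utilde : κ → ℝ) (hutilde : ∀ j ∈ J, utilde j = R j - μ j * C j)
    (f : ℝ) (hf : f = ∑ i ∈ I, u i + ∑ j ∈ J, utilde j) :
    f = ∑ i ∈ I, α i * T i - ∑ j ∈ J, μ j * C j :=
  sum_payoff_pricing_cancels_general I J w α T μ C P ξ χ hχ η hη Pay hPay R hR u hu utilde hutilde f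
    hf
end
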